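/- arXiv:2311.15388 — 5 statements merged into one kernel-verified Lean document; each statement's English description precedes it below -/
import Mathlib

section
/- For every integer n ≥ 1, the number of Arndt compositions of n equals the n-th Fibonacci number, i.e. a(n) = F_n. Equivalently, the formal power series Σ_{n≥0} a(n) xⁿ over ℤ satisfies (1 - x - x²) · Σ_{n≥0} a(n) xⁿ = 1 - x². -/
/-!
Adding 1 to the first part maps the Arndt compositions of `n` bijectively onto those of `n + 1`
whose first two parts do not differ by exactly 1 (the empty composition goes to `(1)`). The
remaining ones are the tight compositions `(y + 1, y, ρ)`. A tight composition of `n + 3` is either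
`(2, 1, ρ)` with `ρ` an Arndt composition of `n`, or comes from a tight composition of `n + 1` by
adding 1 to each of its first two parts. With `t n` the number of tight compositions of `n` this
gives `a (n + 1) = a n + t (n + 1)` and `t (n + 3) = a n + t (n + 1)`, hence
`a (n + 3) = a (n + 2) + a (n + 1)`; together with `a 0 = a 1 = a 2 = 1` this yields `a n = F n`
for `n ≥ 1`, and the generating function is `1 + x / (1 - x - x²)`.
-/

/-- `l` is a composition of `n`: a finite list of positive integers summing to `n`
(the empty list is the unique composition of `0`). -/
def IsComposition (n : ℕ) (l : List ℕ) : Prop :=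
  (∀ x ∈ l, 0 < x) ∧ l.sum = n

/-- The Arndt condition: `σ_{2i-1} > σ_{2i}` (1-based) for every `i` with `2i ≤ ℓ`;
with 0-based indices, `l[2i] > l[2i+1]` whenever `2i+1 < l.length`. -/
def IsArndt (l : List ℕ) : Prop :=
  ∀ i : ℕ, 2 * i + 1 < l.length → l.getD (2 * i + 1) 0 < l.getD (2 * i) 0

/-- `arndt n` is the number of Arndt compositions of `n`. -/
noncomputable def arndt (n : ℕ) : ℕ :=
  Set.ncard {l : List ℕ | IsComposition n l ∧ IsArndt l}

/-- `arndtParts n m` is the number of Arndt compositions of `n` with exactly `m` parts. -/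
noncomputable def arndtParts (n m : ℕ) : ℕ :=
  Set.ncard {l : List ℕ | IsComposition n l ∧ IsArndt l ∧ l.length = m}

/-- The generalized binomial coefficient `C(a,b) = a(a-1)⋯(a-b+1)/b!` for an integer `a`
and a natural number `b` (represented as a nonnegative integer); it is `0` for negative `b`. -/
def genChoose (a b : ℤ) : ℤ :=
  if 0 ≤ b then (∏ i ∈ Finset.range b.toNat, (a - (i : ℤ))) / (b.toNat.factorial : ℤ) else 0

lemma isArndt_nil : IsArndt [] := fun _ h => by simp at h

lemma isArndt_singleton (x : ℕ) : IsArndt [x] := fun _ h => by simp at h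

lemma isArndt_cons_cons {x y : ℕ} {l : List ℕ} :
    IsArndt (x :: y :: l) ↔ y < x ∧ IsArndt l := by
  constructor
  · intro h
    exact ⟨h 0 (by simp), fun i hi => h (i + 1) (by simp only [List.length_cons]; omega)⟩
  · rintro ⟨hxy, h⟩ (_ | i) hi
    · exact hxy
    · exact h i (by simp only [List.length_cons] at hi; omega)

def arndtSet (n : ℕ) : Set (List ℕ) := {l | IsComposition n l ∧ IsArndt l}

lemma arndt_eq_ncard (n : ℕ) : arndt n = (arndtSet n).ncard := rfl

lemma nil_mem_arndtSet {n : ℕ} : [] ∈ arndtSet n ↔ n = 0 := by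
  simp [arndtSet, IsComposition, isArndt_nil, eq_comm]

lemma singleton_mem_arndtSet {n x : ℕ} : [x] ∈ arndtSet n ↔ 0 < n ∧ x = n := by
  simp only [arndtSet, IsComposition, Set.mem_ofPred_eq, List.mem_singleton, forall_eq,
    List.sum_singleton, isArndt_singleton, and_true]
  omega

lemma cons_cons_mem_arndtSet {n x y : ℕ} {ρ : List ℕ} :
    x :: y :: ρ ∈ arndtSet n ↔ 0 < y ∧ y < x ∧ ∃ k, ρ ∈ arndtSet k ∧ x + y + k = n := by
  simp only [arndtSet, IsComposition, Set.mem_ofPred_eq, isArndt_cons_cons, List.mem_cons,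
    forall_eq_or_imp, List.sum_cons]
  constructor
  · rintro ⟨⟨⟨-, hy, hρ⟩, hsum⟩, hxy, hA⟩
    exact ⟨hy, hxy, ρ.sum, ⟨⟨hρ, rfl⟩, hA⟩, by omega⟩
  · rintro ⟨hy, hxy, k, ⟨⟨hρ, rfl⟩, hA⟩, rfl⟩
    exact ⟨⟨⟨by omega, hy, hρ⟩, by omega⟩, hxy, hA⟩

lemma arndtSet_finite (n : ℕ) : (arndtSet n).Finite :=
  (Set.finite_range (Composition.blocks (n := n))).subset fun l ⟨⟨hpos, hsum⟩, _⟩ =>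
    ⟨⟨l, fun hx => hpos _ hx, hsum⟩, rfl⟩

def bumpHead : List ℕ → List ℕ
  | [] => [1]
  | x :: t => (x + 1) :: t

def bumpPair : List ℕ → List ℕ
  | x :: y :: ρ => (x + 1) :: (y + 1) :: ρ
  | l => l

def tightArndtSet (n : ℕ) : Set (List ℕ) :=
  {l ∈ arndtSet n | ∃ y ρ, l = (y + 1) :: y :: ρ}

lemma tightArndtSet_finite (n : ℕ) : (tightArndtSet n).Finite :=
  (arndtSet_finite n).subset fun _ hl => hl.1

lemma arndtSet_succ (n : ℕ) :
    arndtSet (n + 1) = bumpHead '' arndtSet n ∪ tightArndtSet (n + 1) := by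
  apply Set.Subset.antisymm
  · rintro (_ | ⟨x, _ | ⟨y, ρ⟩⟩) hl
    · exact absurd (nil_mem_arndtSet.1 hl) n.succ_ne_zero
    · obtain ⟨-, rfl⟩ := singleton_mem_arndtSet.1 hl
      left
      rcases n with _ | n
      · exact ⟨[], nil_mem_arndtSet.2 rfl, rfl⟩
      · exact ⟨[n + 1], singleton_mem_arndtSet.2 ⟨n.succ_pos, rfl⟩, rfl⟩
    · obtain ⟨hy, hyx, k, hρ, hsum⟩ := cons_cons_mem_arndtSet.1 hl
      obtain ⟨x, rfl⟩ : ∃ x', x = x' + 1 := ⟨x - 1, by omega⟩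
      by_cases hx : x = y
      · exact Or.inr ⟨hl, y, ρ, by rw [hx]⟩
      · exact Or.inl ⟨x :: y :: ρ, cons_cons_mem_arndtSet.2 ⟨hy, by omega, k, hρ, by omega⟩, rfl⟩
  · rintro l (⟨_ | ⟨x, _ | ⟨y, ρ⟩⟩, hm, rfl⟩ | ⟨hl, -⟩)
    · rw [nil_mem_arndtSet.1 hm]
      exact singleton_mem_arndtSet.2 ⟨Nat.one_pos, rfl⟩
    · exact singleton_mem_arndtSet.2 ⟨n.succ_pos, by rw [(singleton_mem_arndtSet.1 hm).2]⟩
    · obtain ⟨hy, hyx, k, hρ, rfl⟩ := cons_cons_mem_arndtSet.1 hm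
      exact cons_cons_mem_arndtSet.2 ⟨hy, by omega, k, hρ, by omega⟩
    · exact hl

lemma disjoint_bumpHead_image_tightArndtSet (n : ℕ) :
    Disjoint (bumpHead '' arndtSet n) (tightArndtSet (n + 1)) := by
  rw [Set.disjoint_left]
  rintro _ ⟨_ | ⟨x, _ | ⟨y, ρ⟩⟩, hm, rfl⟩ ⟨-, z, σ, h⟩
  · simp [bumpHead] at h
  · simp [bumpHead] at h
  · simp only [bumpHead, List.cons.injEq] at h
    have := (cons_cons_mem_arndtSet.1 hm).2.1
    omega

lemma injOn_bumpHead (n : ℕ) : Set.InjOn bumpHead (arndtSet n) := by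
  rintro (_ | ⟨x, l⟩) hl (_ | ⟨x', l'⟩) hl' h
  · rfl
  · simp only [bumpHead, List.cons.injEq] at h
    obtain ⟨⟨hpos, -⟩, -⟩ := hl'
    exact absurd (hpos x' List.mem_cons_self) (by omega)
  · simp only [bumpHead, List.cons.injEq] at h
    obtain ⟨⟨hpos, -⟩, -⟩ := hl
    exact absurd (hpos x List.mem_cons_self) (by omega)
  · simpa only [bumpHead, List.cons.injEq, Nat.add_right_cancel_iff] using h

lemma bumpPair_injective : Function.Injective bumpPair := by
  rintro (_ | ⟨x, _ | ⟨y, ρ⟩⟩) (_ | ⟨x', _ | ⟨y', ρ'⟩⟩) h <;> simp_all [bumpPair]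

lemma tightArndtSet_add_three (n : ℕ) :
    tightArndtSet (n + 3) =
      (fun ρ => 2 :: 1 :: ρ) '' arndtSet n ∪ bumpPair '' tightArndtSet (n + 1) := by
  apply Set.Subset.antisymm
  · rintro _ ⟨hl, _ | _ | y, ρ, rfl⟩
    · exact absurd (cons_cons_mem_arndtSet.1 hl).1 (lt_irrefl 0)
    · obtain ⟨-, -, k, hρ, hsum⟩ := cons_cons_mem_arndtSet.1 hl
      exact Or.inl ⟨ρ, by rwa [show n = k by omega], rfl⟩
    · obtain ⟨-, -, k, hρ, hsum⟩ := cons_cons_mem_arndtSet.1 hl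
      refine Or.inr ⟨(y + 2) :: (y + 1) :: ρ, ⟨?_, y + 1, ρ, rfl⟩, rfl⟩
      exact cons_cons_mem_arndtSet.2 ⟨y.succ_pos, by omega, k, hρ, by omega⟩
  · rintro _ (⟨ρ, hρ, rfl⟩ | ⟨_, ⟨hm, y, ρ, rfl⟩, rfl⟩)
    · exact ⟨cons_cons_mem_arndtSet.2 ⟨Nat.one_pos, by omega, n, hρ, by omega⟩, 1, ρ, rfl⟩
    · obtain ⟨-, -, k, hρ, hsum⟩ := cons_cons_mem_arndtSet.1 hm
      exact ⟨cons_cons_mem_arndtSet.2 ⟨y.succ_pos, by omega, k, hρ, by omega⟩, y + 1, ρ, rfl⟩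

lemma disjoint_image_bumpPair_tightArndtSet (n : ℕ) :
    Disjoint ((fun ρ => 2 :: 1 :: ρ) '' arndtSet n) (bumpPair '' tightArndtSet (n + 1)) := by
  rw [Set.disjoint_left]
  rintro _ ⟨ρ, -, rfl⟩ ⟨_, ⟨hm, y, σ, rfl⟩, h⟩
  have := (cons_cons_mem_arndtSet.1 hm).1
  simp only [bumpPair, List.cons.injEq] at h
  omega

lemma arndt_succ (n : ℕ) : arndt (n + 1) = arndt n + (tightArndtSet (n + 1)).ncard := by
  rw [arndt_eq_ncard, arndtSet_succ,
    Set.ncard_union_eq (disjoint_bumpHead_image_tightArndtSet n)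
      ((arndtSet_finite n).image _) (tightArndtSet_finite _),
    (injOn_bumpHead n).ncard_image, arndt_eq_ncard]

lemma ncard_tightArndtSet_add_three (n : ℕ) :
    (tightArndtSet (n + 3)).ncard = arndt n + (tightArndtSet (n + 1)).ncard := by
  rw [tightArndtSet_add_three,
    Set.ncard_union_eq (disjoint_image_bumpPair_tightArndtSet n)
      ((arndtSet_finite n).image _) ((tightArndtSet_finite _).image _),
    Set.ncard_image_of_injective _ (fun _ _ h => List.tail_eq_of_cons_eq
      (List.tail_eq_of_cons_eq h)),
    Set.ncard_image_of_injective _ bumpPair_injective, arndt_eq_ncard]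

lemma tightArndtSet_eq_empty {n : ℕ} (hn : n < 3) : tightArndtSet n = ∅ := by
  refine Set.eq_empty_of_forall_notMem ?_
  rintro _ ⟨hl, y, ρ, rfl⟩
  obtain ⟨hy, -, k, -, hsum⟩ := cons_cons_mem_arndtSet.1 hl
  omega

lemma arndt_zero : arndt 0 = 1 := by
  rw [arndt_eq_ncard, Set.ncard_eq_one]
  refine ⟨[], Set.eq_singleton_iff_unique_mem.2 ⟨nil_mem_arndtSet.2 rfl, ?_⟩⟩
  rintro (_ | ⟨x, l⟩) ⟨⟨hpos, hsum⟩, -⟩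
  · rfl
  · have := hpos x List.mem_cons_self
    simp only [List.sum_cons] at hsum
    omega

lemma arndt_add_three (n : ℕ) : arndt (n + 3) = arndt (n + 2) + arndt (n + 1) := by
  rw [arndt_succ (n + 2), ncard_tightArndtSet_add_three, arndt_succ n]

lemma arndt_one : arndt 1 = 1 := by
  rw [arndt_succ, arndt_zero, tightArndtSet_eq_empty (by norm_num), Set.ncard_empty]

lemma arndt_two : arndt 2 = 1 := by
  rw [arndt_succ, arndt_one, tightArndtSet_eq_empty (by norm_num), Set.ncard_empty]

lemma arndt_eq_fib_of_pos {n : ℕ} (hn : 1 ≤ n) : arndt n = Nat.fib n := by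
  have key : ∀ m, arndt (m + 1) = Nat.fib (m + 1) ∧ arndt (m + 2) = Nat.fib (m + 2) := by
    intro m
    induction m with
    | zero => exact ⟨arndt_one, arndt_two⟩
    | succ m ih =>
      refine ⟨ih.2, ?_⟩
      rw [arndt_add_three, ih.1, ih.2, Nat.fib_add_two (n := m + 1), add_comm]
  obtain ⟨m, rfl⟩ := Nat.exists_eq_add_of_le' hn
  exact (key m).1

open PowerSeries in
lemma one_sub_X_sub_X_sq_mul_mk_fib {R : Type*} [CommRing R] :
    (1 - X - X ^ 2) * mk (fun n => (Nat.fib n : R)) = X := by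
  ext (_ | _ | n)
  · simp
  · simp [sub_mul, coeff_X, coeff_X_pow_mul']
  · simp [sub_mul, coeff_X, coeff_X_pow_mul', Nat.fib_add_two]

/-- the number of Arndt compositions of `n` is the `n`-th Fibonacci number;
equivalently `(1 - x - x²) · Σ_{n≥0} a(n) xⁿ = 1 - x²` as formal power series over `ℤ`. -/
theorem arndt_eq_fib :
    (∀ n : ℕ, 1 ≤ n → arndt n = Nat.fib n) ∧
    (1 - PowerSeries.X - PowerSeries.X ^ 2) *
        PowerSeries.mk (fun n => (arndt n : ℤ)) =
      1 - PowerSeries.X ^ 2 := by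
  refine ⟨fun n hn => arndt_eq_fib_of_pos hn, ?_⟩
  have mk_arndt : PowerSeries.mk (fun n => (arndt n : ℤ)) =
      1 + PowerSeries.mk (fun n => (Nat.fib n : ℤ)) := by
    ext (_ | n)
    · simp [arndt_zero]
    · simp [arndt_eq_fib_of_pos n.succ_pos, PowerSeries.coeff_one]
  rw [mk_arndt, mul_add, mul_one, one_sub_X_sub_X_sq_mul_mk_fib]
  ring
end

section
/- For all integers n ≥ 3 and m ≥ 2, the numbers a(n,m) satisfy the recurrence a(n,m) + a(n-3,m) = a(n-1,m) + a(n-2,m) + a(n-3,m-2), i.e. a(n,m) = a(n-1,m) + a(n-2,m) − a(n-3,m) + a(n-3,m-2). -/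
/-! Deleting the first pair `(k, j)`, `k > j ≥ 1`, of an Arndt composition with `m + 2` parts
leaves an Arndt composition with `m` parts, and there are `⌊(s - 1) / 2⌋` such pairs with
`k + j = s`. Hence `a(n, m + 2) = ∑ᵣ w(n - r) a(r, m)` with `w(s) = ⌊(s - 1) / 2⌋`, the
coefficients of `x³ / ((1 - x)(1 - x²))`; multiplying by `(1 - x)(1 - x²)` shows
`w(s) - w(s - 1) - w(s - 2) + w(s - 3) = [s = 3]`, which is the recurrence. -/

open Finset

open Classical in
noncomputable def arndtCompositions (n m : ℕ) : Finset (List ℕ) :=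
  ((univ : Finset (Composition n)).image Composition.blocks).filter
    fun l => IsArndt l ∧ l.length = m

lemma mem_arndtCompositions {n m : ℕ} {l : List ℕ} :
    l ∈ arndtCompositions n m ↔ IsComposition n l ∧ IsArndt l ∧ l.length = m := by
  simp only [arndtCompositions, mem_filter, mem_image, mem_univ, true_and]
  refine and_congr_left fun _ => ⟨?_, fun ⟨hpos, hsum⟩ => ⟨⟨l, hpos _, hsum⟩, rfl⟩⟩
  rintro ⟨c, rfl⟩
  exact ⟨fun _ => c.blocks_pos, c.blocks_sum⟩

lemma arndtParts_eq_card (n m : ℕ) : arndtParts n m = #(arndtCompositions n m) := by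
  rw [arndtParts, ← Set.ncard_coe_finset]
  congr
  ext l
  simp [mem_arndtCompositions]

lemma isArndt_cons_cons_s2 {k j : ℕ} {t : List ℕ} :
    IsArndt (k :: j :: t) ↔ j < k ∧ IsArndt t := by
  have shift (i : ℕ) : 2 * (i + 1) = 2 * i + 1 + 1 := by ring
  constructor
  · intro h
    refine ⟨by simpa using h 0 (by simp), fun i hi => ?_⟩
    simpa [shift] using h (i + 1) (by simp [shift, hi])
  · rintro ⟨hjk, ht⟩ (_ | i) hi
    · simpa using hjk
    · simpa [shift] using ht i (by simpa [shift] using hi)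

def arndtPairs (s : ℕ) : Finset (ℕ × ℕ) :=
  (antidiagonal s).filter fun p => p.2 < p.1 ∧ 0 < p.2

lemma card_arndtPairs (s : ℕ) : #(arndtPairs s) = (s - 1) / 2 := by
  have h : arndtPairs s = (Icc 1 ((s - 1) / 2)).image fun j => (s - j, j) := by
    ext ⟨k, j⟩
    simp only [arndtPairs, mem_filter, HasAntidiagonal.mem_antidiagonal, mem_image, mem_Icc,
      Prod.mk.injEq]
    constructor
    · rintro ⟨hs, hjk, hj⟩
      exact ⟨j, by omega, by omega, rfl⟩
    · rintro ⟨j, hj, rfl, rfl⟩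
      omega
  rw [h, card_image_of_injective _ fun _ _ h => congrArg Prod.snd h, Nat.card_Icc]
  omega

lemma arndtCompositions_add_two (n m : ℕ) :
    arndtCompositions n (m + 2) =
      ((antidiagonal n).sigma fun q => arndtPairs q.2 ×ˢ arndtCompositions q.1 m).image
        fun x => x.2.1.1 :: x.2.1.2 :: x.2.2 := by
  ext l
  simp only [mem_image, mem_sigma, mem_product, HasAntidiagonal.mem_antidiagonal, arndtPairs,
    mem_filter, mem_arndtCompositions, IsComposition, Sigma.exists, Prod.exists]
  constructor
  · rintro ⟨⟨hpos, hsum⟩, harndt, hlen⟩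
    obtain ⟨k, j, t, rfl⟩ : ∃ k j t, l = k :: j :: t := by
      rcases l with _ | ⟨k, _ | ⟨j, t⟩⟩ <;> simp_all
    obtain ⟨hjk, ht⟩ := isArndt_cons_cons_s2.mp harndt
    simp only [List.mem_cons, forall_eq_or_imp, List.sum_cons, List.length_cons] at hpos hsum hlen
    exact ⟨t.sum, k + j, k, j, t, ⟨by omega, ⟨rfl, hjk, hpos.2.1⟩,
      ⟨hpos.2.2, rfl⟩, ht, by omega⟩, rfl⟩
  · rintro ⟨r, s, k, j, t, ⟨hrs, ⟨rfl, hjk, hj⟩, ⟨htpos, rfl⟩, ht, rfl⟩, rfl⟩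
    refine ⟨⟨?_, ?_⟩, isArndt_cons_cons_s2.mpr ⟨hjk, ht⟩, by simp⟩
    · simp only [List.mem_cons, forall_eq_or_imp]
      exact ⟨by omega, hj, htpos⟩
    · simp only [List.sum_cons]
      omega

lemma arndtParts_add_two_eq_sum_antidiagonal (n m : ℕ) :
    arndtParts n (m + 2) = ∑ q ∈ antidiagonal n, (q.2 - 1) / 2 * arndtParts q.1 m := by
  rw [arndtParts_eq_card, arndtCompositions_add_two, card_image_of_injOn, card_sigma]
  · simp [card_product, card_arndtPairs, arndtParts_eq_card]
  · rintro ⟨⟨r, s⟩, ⟨k, j⟩, t⟩ hx ⟨⟨r', s'⟩, ⟨k', j'⟩, t'⟩ hx' h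
    simp only [coe_sigma, Set.mem_sigma_iff, mem_coe, HasAntidiagonal.mem_antidiagonal,
      mem_product, arndtPairs, mem_filter, mem_arndtCompositions, IsComposition] at hx hx'
    simp only [List.cons.injEq] at h
    obtain ⟨rfl, rfl, rfl⟩ := h
    obtain ⟨rfl, rfl⟩ : r = r' ∧ s = s' := by omega
    rfl

lemma arndtParts_add_two_eq_sum_range {n K : ℕ} (hn : n ≤ K) (m : ℕ) :
    arndtParts n (m + 2) = ∑ r ∈ range (K + 1), (n - r - 1) / 2 * arndtParts r m := by
  rw [arndtParts_add_two_eq_sum_antidiagonal, Nat.sum_antidiagonal_eq_sum_range_succ_mk]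
  refine sum_subset (range_subset_range.2 (by omega)) fun r _ hr => ?_
  simp only [mem_range] at hr
  simp [show n - r - 1 = 0 by omega]

/-- for `n ≥ 3`, `m ≥ 2`,
`a(n,m) + a(n-3,m) = a(n-1,m) + a(n-2,m) + a(n-3,m-2)`. -/
theorem arndtParts_recurrence (n m : ℕ) (hn : 3 ≤ n) (hm : 2 ≤ m) :
    arndtParts n m + arndtParts (n - 3) m =
      arndtParts (n - 1) m + arndtParts (n - 2) m + arndtParts (n - 3) (m - 2) := by
  obtain ⟨m, rfl⟩ := Nat.exists_eq_add_of_le' hm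
  have hsingle : arndtParts (n - 3) m =
      ∑ r ∈ range (n + 1), (if n - 3 = r then 1 else 0) * arndtParts r m := by
    rw [sum_boole_mul, if_pos (mem_range.2 (by omega))]
  rw [Nat.add_sub_cancel, hsingle, arndtParts_add_two_eq_sum_range le_rfl,
    arndtParts_add_two_eq_sum_range (K := n) (by omega),
    arndtParts_add_two_eq_sum_range (K := n) (by omega),
    arndtParts_add_two_eq_sum_range (K := n) (by omega),
    ← sum_add_distrib, ← sum_add_distrib, ← sum_add_distrib]
  refine sum_congr rfl fun r hr => ?_
  have hr : r ≤ n := Nat.lt_succ_iff.1 (mem_range.1 hr)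
  simp only [← add_mul]
  congr 1
  split_ifs <;> omega
end

section
/- For all integers n, m ≥ 0, the following linear recurrence holds in ℤ: (m − n − 2 + ⌊m/2⌋) · a(n+2, m) + (m − ⌊m/2⌋) · a(n+1, m) + n · a(n, m) = 0. -/
/-!
Read from its last part, an Arndt composition with `m` parts ends in an unpaired part `σ_m` when
`m` is odd and in a pair `σ_{m-1} > σ_m` when `m > 0` is even. If `σ_m > 1`, lower that part
(resp. both parts of the pair) by one; if `σ_m = 1`, delete it (resp. delete it and lower
`σ_{m-1}` by one). This gives `a(n+1,m) = a(n,m) + a(n,m-1)` for odd `m` and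
`a(n+2,m) = a(n,m) + a(n,m-1)` for even `m > 0`, so the generating function
`F_m = ∑ₙ a(n,m) Xⁿ` satisfies `(1 - X) F_m = X F_{m-1}`, resp. `(1 - X²) F_m = X² F_{m-1}`; that
is, `F_m = X^{m+k} (1 - X)^{-m} (1 + X)^{-k}` with `k = ⌊m/2⌋`. Its logarithmic derivative gives
`X (1 - X²) F_m' = ((m + k) + (m - k) X) F_m`, and the coefficient of `X^{n+2}` in this equation
is the recurrence.
-/

open PowerSeries

theorem Set.ncard_image_union_image {α β γ : Type*} {f : α → γ} {g : β → γ} {s : Set α}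
    {t : Set β} (hf : f.Injective) (hg : g.Injective) (hs : s.Finite) (ht : t.Finite)
    (h : Disjoint (f '' s) (g '' t)) : (f '' s ∪ g '' t).ncard = s.ncard + t.ncard := by
  rw [Set.ncard_union_eq h (hs.image f) (ht.image g), Set.ncard_image_of_injective _ hf,
    Set.ncard_image_of_injective _ hg]

theorem List.modify_succ_injective (i : ℕ) :
    Function.Injective fun l : List ℕ => l.modify i Nat.succ :=
  Function.LeftInverse.injective (g := fun l => l.modify i Nat.pred) fun l =>
    (List.modify_modify_eq Nat.succ Nat.pred i l).trans (List.modify_id i l)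

theorem isArndt_append_singleton {u : List ℕ} {a : ℕ} :
    IsArndt (u ++ [a]) ↔ IsArndt u ∧ (u.length % 2 = 1 → a < u.getLastD 0) := by
  simp only [IsArndt, List.length_append, List.length_singleton, Nat.lt_succ_iff_lt_or_eq, or_imp,
    forall_and]
  have hlast : ∀ i, 2 * i + 1 = u.length →
      ((u ++ [a]).getD (2 * i + 1) 0 < (u ++ [a]).getD (2 * i) 0 ↔ a < u.getLastD 0) := by
    intro i hi
    rw [List.getD_append_right _ _ _ _ hi.ge, List.getD_append _ _ _ _ (by omega),
      List.getLastD_eq_getLast?, List.getLast?_eq_getElem?, ← hi]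
    simp [List.getD_eq_getElem?_getD]
  refine and_congr (forall₂_congr fun i hi => ?_) ⟨fun h hodd => ?_, fun h i hi => ?_⟩
  · rw [List.getD_append _ _ _ _ hi, List.getD_append _ _ _ _ (by omega)]
  · obtain ⟨i, hi⟩ : ∃ i, 2 * i + 1 = u.length := ⟨u.length / 2, by omega⟩
    exact (hlast i hi).1 (h i hi)
  · exact (hlast i hi).2 (h (by omega))

theorem isArndt_reverse_cons {a : ℕ} {t : List ℕ} :
    IsArndt (a :: t).reverse ↔ IsArndt t.reverse ∧ (t.length % 2 = 1 → a < t.headD 0) := by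
  simp [isArndt_append_singleton]

-- Compositions are stored reversed, so that the recursion acts on the head.
def revArndt (n m : ℕ) : Set (List ℕ) :=
  {l | IsComposition n l ∧ IsArndt l.reverse ∧ l.length = m}

theorem arndtParts_eq_ncard_revArndt (n m : ℕ) : arndtParts n m = (revArndt n m).ncard := by
  rw [arndtParts, ← Set.ncard_preimage_of_injective_subset_range List.reverse_injective
    (by simp [List.reverse_surjective.range_eq])]
  congr 1
  ext l
  simp [revArndt, IsComposition]

theorem revArndt_finite (n m : ℕ) : (revArndt n m).Finite :=
  (Set.finite_range (Composition.blocks (n := n))).subset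
    fun l ⟨⟨hpos, hsum⟩, _⟩ => ⟨⟨l, hpos _, hsum⟩, rfl⟩

theorem revArndt_succ_odd (n j : ℕ) :
    revArndt (n + 1) (2 * j + 1) =
      (fun l => l.modify 0 Nat.succ) '' revArndt n (2 * j + 1) ∪
        List.cons 1 '' revArndt n (2 * j) := by
  ext l
  constructor
  · intro hl
    rcases l with _ | ⟨_ | _ | a, t⟩
    · simp [revArndt] at hl
    · simp [revArndt, IsComposition] at hl
    · refine Or.inr ⟨t, ?_, rfl⟩
      simp_all [revArndt, IsComposition, isArndt_reverse_cons, -List.reverse_cons]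
      omega
    · refine Or.inl ⟨(a + 1) :: t, ?_, rfl⟩
      simp_all [revArndt, IsComposition, isArndt_reverse_cons, -List.reverse_cons]
      omega
  · rintro (⟨_ | ⟨a, t⟩, ht, rfl⟩ | ⟨t, ht, rfl⟩) <;>
      simp_all [revArndt, IsComposition, isArndt_reverse_cons, -List.reverse_cons] <;> omega

theorem revArndt_add_two_even (n j : ℕ) :
    revArndt (n + 2) (2 * j + 2) =
      (fun l => (l.modify 0 Nat.succ).modify 1 Nat.succ) '' revArndt n (2 * j + 2) ∪
        (fun l => 1 :: l.modify 0 Nat.succ) '' revArndt n (2 * j + 1) := by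
  ext l
  constructor
  · intro hl
    rcases l with _ | ⟨_ | _ | a, _ | ⟨b, t⟩⟩
    · simp [revArndt] at hl
    · simp [revArndt] at hl
    · simp [revArndt, IsComposition] at hl
    · simp [revArndt] at hl
    · refine Or.inr ⟨(b - 1) :: t, ?_, ?_⟩ <;>
        simp_all [revArndt, IsComposition, isArndt_reverse_cons, -List.reverse_cons] <;> omega
    · simp [revArndt] at hl
    · refine Or.inl ⟨(a + 1) :: (b - 1) :: t, ?_, ?_⟩ <;>
        simp_all [revArndt, IsComposition, isArndt_reverse_cons, -List.reverse_cons] <;> omega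
  · rintro (⟨_ | ⟨a, _ | ⟨b, t⟩⟩, ht, rfl⟩ | ⟨_ | ⟨b, t⟩, ht, rfl⟩) <;>
      simp_all [revArndt, IsComposition, isArndt_reverse_cons, -List.reverse_cons] <;> omega

theorem arndtParts_zero_zero : arndtParts 0 0 = 1 := by
  refine Set.ncard_eq_one.2 ⟨[], Set.ext fun l => ⟨fun hl => List.length_eq_zero_iff.1 hl.2.2, ?_⟩⟩
  rintro rfl
  simp [IsComposition, IsArndt]

theorem arndtParts_succ_zero (n : ℕ) : arndtParts (n + 1) 0 = 0 := by
  refine (congrArg Set.ncard (Set.eq_empty_of_forall_notMem ?_)).trans (Set.ncard_empty _)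
  rintro l ⟨⟨-, hsum⟩, -, hl⟩
  simp [List.length_eq_zero_iff.1 hl] at hsum

theorem arndtParts_eq_zero_of_lt {n m : ℕ} (h : n < m) : arndtParts n m = 0 := by
  refine (congrArg Set.ncard (Set.eq_empty_of_forall_notMem ?_)).trans (Set.ncard_empty _)
  rintro l ⟨⟨hpos, rfl⟩, -, rfl⟩
  exact h.not_ge (List.length_le_sum_of_one_le l hpos)

theorem arndtParts_succ_odd (n j : ℕ) :
    arndtParts (n + 1) (2 * j + 1) = arndtParts n (2 * j + 1) + arndtParts n (2 * j) := by
  simp only [arndtParts_eq_ncard_revArndt, revArndt_succ_odd]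
  refine Set.ncard_image_union_image (List.modify_succ_injective 0) List.cons_injective
    (revArndt_finite _ _) (revArndt_finite _ _) (Set.disjoint_left.2 ?_)
  rintro _ ⟨_ | ⟨a, t⟩, ht, rfl⟩ ⟨s, -, hs⟩ <;> simp_all [revArndt, IsComposition]

theorem arndtParts_add_two_even (n j : ℕ) :
    arndtParts (n + 2) (2 * j + 2) = arndtParts n (2 * j + 2) + arndtParts n (2 * j + 1) := by
  simp only [arndtParts_eq_ncard_revArndt, revArndt_add_two_even]
  refine Set.ncard_image_union_image
    ((List.modify_succ_injective 1).comp (List.modify_succ_injective 0))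
    (List.cons_injective.comp (List.modify_succ_injective 0))
    (revArndt_finite _ _) (revArndt_finite _ _) (Set.disjoint_left.2 ?_)
  rintro _ ⟨_ | ⟨a, t⟩, ht, rfl⟩ ⟨s, -, hs⟩ <;> simp_all [revArndt, IsComposition]

section
variable {R : Type*} [CommRing R] {f g : R⟦X⟧} {c d : R}

theorem derivative_eq_of_one_sub_X_mul_eq
    (hf : X * (1 - X ^ 2) * d⁄dX R f = (C c + C d * X) * f) (hg : (1 - X) * g = X * f) :
    X * (1 - X ^ 2) * d⁄dX R g = (C (c + 1) + C (d + 1) * X) * g := by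
  have hunit : IsUnit (1 - X : R⟦X⟧) := isUnit_iff_constantCoeff.2 (by simp)
  have hg' := congrArg (d⁄dX R) hg
  simp only [Derivation.leibniz, map_sub, derivative_one, derivative_X, smul_eq_mul] at hg'
  refine hunit.mul_left_cancel ?_
  simp only [map_add, map_one]
  linear_combination X * (1 - X ^ 2) * hg' + X * hf - ((1 - X ^ 2) + C c + C d * X) * hg

theorem derivative_eq_of_one_sub_X_sq_mul_eq
    (hf : X * (1 - X ^ 2) * d⁄dX R f = (C c + C d * X) * f) (hg : (1 - X ^ 2) * g = X ^ 2 * f) :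
    X * (1 - X ^ 2) * d⁄dX R g = (C (c + 2) + C d * X) * g := by
  have hunit : IsUnit (1 - X ^ 2 : R⟦X⟧) := isUnit_iff_constantCoeff.2 (by simp)
  have hg' := congrArg (d⁄dX R) hg
  simp only [Derivation.leibniz, Derivation.leibniz_pow, map_sub, derivative_one, derivative_X,
    smul_eq_mul] at hg'
  refine hunit.mul_left_cancel ?_
  simp only [map_add, map_ofNat]
  linear_combination X * (1 - X ^ 2) * hg' + X ^ 2 * hf - (2 * (1 - X ^ 2) + C c + C d * X) * hg

theorem coeff_recurrence_of_derivative_eq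
    (h : X * (1 - X ^ 2) * d⁄dX R f = (C c + C d * X) * f) (n : ℕ) :
    (c - n - 2) * coeff (n + 2) f + d * coeff (n + 1) f + n * coeff n f = 0 := by
  have hn := congrArg (coeff (n + 2)) h
  rw [mul_sub, mul_one, ← pow_succ', sub_mul, add_mul, mul_assoc] at hn
  rcases n with _ | n <;>
    simp [coeff_X_pow_mul', coeff_derivative, add_assoc] at hn ⊢ <;> linear_combination -hn

end

noncomputable def arndtPartsSeries (m : ℕ) : ℤ⟦X⟧ := PowerSeries.mk fun n => (arndtParts n m : ℤ)

theorem arndtPartsSeries_zero : arndtPartsSeries 0 = 1 := by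
  ext (_ | n)
  · simp [arndtPartsSeries, arndtParts_zero_zero]
  · simp [arndtPartsSeries, arndtParts_succ_zero]

theorem one_sub_X_mul_arndtPartsSeries_odd (j : ℕ) :
    (1 - X) * arndtPartsSeries (2 * j + 1) = X * arndtPartsSeries (2 * j) := by
  ext (_ | n)
  · simp [arndtPartsSeries, arndtParts_eq_zero_of_lt]
  · simp [arndtPartsSeries, sub_mul, arndtParts_succ_odd]

theorem one_sub_X_sq_mul_arndtPartsSeries_even (j : ℕ) :
    (1 - X ^ 2) * arndtPartsSeries (2 * j + 2) = X ^ 2 * arndtPartsSeries (2 * j + 1) := by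
  ext (_ | _ | n)
  · simp [arndtPartsSeries, arndtParts_eq_zero_of_lt, coeff_X_pow_mul']
  · simp [arndtPartsSeries, arndtParts_eq_zero_of_lt, sub_mul, coeff_X_pow_mul']
  · simp [arndtPartsSeries, sub_mul, coeff_X_pow_mul', arndtParts_add_two_even]

theorem arndtPartsSeries_derivative (m : ℕ) :
    X * (1 - X ^ 2) * d⁄dX ℤ (arndtPartsSeries m) =
      (C ((m + m / 2 : ℕ) : ℤ) + C ((m : ℤ) - (m / 2 : ℕ)) * X) * arndtPartsSeries m := by
  induction m with
  | zero => simp [arndtPartsSeries_zero]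
  | succ m ih =>
    obtain ⟨j, rfl | rfl⟩ := Nat.even_or_odd' m
    · convert derivative_eq_of_one_sub_X_mul_eq ih (one_sub_X_mul_arndtPartsSeries_odd j)
        using 5 <;> omega
    · convert derivative_eq_of_one_sub_X_sq_mul_eq ih (one_sub_X_sq_mul_arndtPartsSeries_even j)
        using 5 <;> omega

/-- for all `n, m ≥ 0`,
`(m - n - 2 + ⌊m/2⌋)·a(n+2,m) + (m - ⌊m/2⌋)·a(n+1,m) + n·a(n,m) = 0` in `ℤ`. -/
theorem arndtParts_WZ_recurrence (n m : ℕ) :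
    ((m : ℤ) - (n : ℤ) - 2 + ((m / 2 : ℕ) : ℤ)) * (arndtParts (n + 2) m : ℤ) +
        ((m : ℤ) - ((m / 2 : ℕ) : ℤ)) * (arndtParts (n + 1) m : ℤ) +
        (n : ℤ) * (arndtParts n m : ℤ) = 0 := by
  have h := coeff_recurrence_of_derivative_eq (arndtPartsSeries_derivative m) n
  simp only [arndtPartsSeries, coeff_mk, Nat.cast_add] at h
  linear_combination h
end

section
/- For every integer n ≥ 1, F_n = Σ_{m=0}^{n} Σ_{ℓ=0}^{n − m − ⌊m/2⌋} C(m + ℓ − 1, ℓ) · C(n − m − ℓ − 1, n − m − ⌊m/2⌋ − ℓ) · (−1)^{n − m − ⌊m/2⌋ − ℓ}, where the inner sum is empty when n − m − ⌊m/2⌋ < 0, and C(a, b) denotes the generalized binomial coefficient a(a−1)⋯(a−b+1)/b! for an integer a (possibly negative) and a natural number b. -/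
/-!
The `m`-th summand is the coefficient of `X ^ n` in
`X ^ (m + ⌊m/2⌋) (1 - X)⁻ᵐ (1 + X)^(-⌊m/2⌋)`. The summands for `m = 2k` and `m = 2k + 1` add up
to `(1 - X)⁻¹ yᵏ` with `y = X³ (1 - X)⁻² (1 + X)⁻¹`, so the whole series sums to
`(1 - X)⁻¹ (1 - y)⁻¹ = (1 - X²) / (1 - X - X²) = 1 + ∑ Fₙ Xⁿ`. Stopping after the first `2K`
summands only disturbs coefficients of degree at least `3K`.
Below, `(1 - X)⁻¹` is `mk 1` and `(1 + X)⁻¹` is `rescale (-1) (mk 1)`.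
-/

open PowerSeries

lemma genChoose_natCast (a j : ℕ) : genChoose a j = a.choose j := by
  rw [genChoose, if_pos (Int.natCast_nonneg j), Int.toNat_natCast,
    ← descPochhammer_eval_eq_prod_range, descPochhammer_eval_eq_descFactorial,
    Nat.choose_eq_descFactorial_div_factorial, Int.natCast_div]

lemma genChoose_add_sub_one (p j : ℕ) :
    genChoose ((p : ℤ) + j - 1) j = (p + j - 1).choose j := by
  obtain ⟨rfl, rfl⟩ | hpos : p = 0 ∧ j = 0 ∨ 0 < p + j := by omega
  · simp [genChoose]
  · rw [show (p : ℤ) + j - 1 = ((p + j - 1 : ℕ) : ℤ) by omega, genChoose_natCast]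

section GeneratingFunctions

variable (R : Type*) [CommRing R]

lemma coeff_mk_one_pow (p j : ℕ) :
    coeff j ((mk 1 : R⟦X⟧) ^ p) = (p + j - 1).choose j := by
  cases p with
  | zero => rcases j with _ | j <;> simp
  | succ d =>
    rw [mk_one_pow_eq_mk_choose_add, coeff_mk, show d + 1 + j - 1 = d + j by omega,
      Nat.choose_symm_add]

lemma coeff_rescale_neg_one_mk_one_pow (q j : ℕ) :
    coeff j (rescale (-1 : R) (mk 1) ^ q) = (-1) ^ j * (q + j - 1).choose j := by
  rw [← map_pow, coeff_rescale, coeff_mk_one_pow]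

lemma rescale_neg_one_mk_one_mul_one_add_X : rescale (-1 : R) (mk 1) * (1 + X) = 1 := by
  have h : rescale (-1 : R) (1 - X) = 1 + X := by simp [sub_eq_add_neg]
  rw [← h, ← map_mul, mk_one_mul_one_sub_eq_one, map_one]

noncomputable def fibSeries : R⟦X⟧ := mk fun n => (Nat.fib n : R)

lemma one_sub_X_sub_X_sq_mul_fibSeries : (1 - X - X ^ 2) * fibSeries R = X := by
  ext n
  rw [show (1 - X - X ^ 2) * fibSeries R = fibSeries R - X * fibSeries R - X ^ 2 * fibSeries R by
    ring]
  rcases n with _ | _ | n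
  · simp [fibSeries]
  · simp [fibSeries, coeff_succ_X_mul, coeff_X_pow_mul']
  · simp [fibSeries, coeff_succ_X_mul, coeff_X_pow_mul', coeff_X, Nat.fib_add_two]

noncomputable def summandSeries (m : ℕ) : R⟦X⟧ :=
  X ^ (m + m / 2) * (mk 1 ^ m * rescale (-1) (mk 1) ^ (m / 2))

lemma coeff_summandSeries (n m : ℕ) :
    coeff n (summandSeries R m) =
      ∑ ℓ ∈ Finset.range (n + 1 - m - m / 2),
        ((m + ℓ - 1).choose ℓ : R) *
          ((-1) ^ (n - m - m / 2 - ℓ) *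
            (m / 2 + (n - m - m / 2 - ℓ) - 1).choose (n - m - m / 2 - ℓ)) := by
  rw [summandSeries, coeff_X_pow_mul']
  split_ifs with h
  · rw [coeff_mul, Finset.Nat.sum_antidiagonal_eq_sum_range_succ_mk,
      show (n - (m + m / 2)).succ = n + 1 - m - m / 2 by omega]
    refine Finset.sum_congr rfl fun ℓ _ => ?_
    rw [coeff_mk_one_pow, coeff_rescale_neg_one_mk_one_pow, Nat.sub_add_eq]
  · rw [show n + 1 - m - m / 2 = 0 by omega, Finset.range_zero, Finset.sum_empty]

lemma sum_range_two_mul_summandSeries (K : ℕ) :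
    ∑ m ∈ Finset.range (2 * K), summandSeries R m =
      mk 1 * ∑ k ∈ Finset.range K, (X ^ 3 * mk 1 ^ 2 * rescale (-1) (mk 1)) ^ k := by
  induction K with
  | zero => simp
  | succ K ih =>
    rw [show 2 * (K + 1) = 2 * K + 1 + 1 by ring, Finset.sum_range_succ, Finset.sum_range_succ, ih,
      Finset.sum_range_succ, summandSeries, summandSeries, show 2 * K / 2 = K by omega,
      show (2 * K + 1) / 2 = K by omega]
    linear_combination
      -(X ^ 3 * mk 1 ^ 2 * rescale (-1) (mk 1)) ^ K * mk_one_mul_one_sub_eq_one (S := R)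

lemma one_sub_X_sub_X_sq_mul_mk_one :
    (1 - X - X ^ 2) * mk 1 = (1 - X ^ 2) * (1 - X ^ 3 * mk 1 ^ 2 * rescale (-1 : R) (mk 1)) := by
  linear_combination
    ((1 - X ^ 2) + X ^ 3 * mk 1 * (1 + X) * rescale (-1 : R) (mk 1)) *
        mk_one_mul_one_sub_eq_one (S := R)
      + X ^ 3 * mk 1 * rescale_neg_one_mk_one_mul_one_add_X R

lemma X_pow_dvd_sum_summandSeries_sub (K : ℕ) :
    X ^ (3 * K) ∣ ∑ m ∈ Finset.range (2 * K), summandSeries R m - (1 + fibSeries R) := by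
  have hunit : IsUnit (1 - X - X ^ 2 : R⟦X⟧) := by simp [isUnit_iff_constantCoeff]
  rw [← hunit.dvd_mul_left, mul_sub, sum_range_two_mul_summandSeries, ← mul_assoc,
    one_sub_X_sub_X_sq_mul_mk_one, mul_assoc, mul_neg_geom_sum, mul_add,
    one_sub_X_sub_X_sq_mul_fibSeries]
  exact ⟨-(1 - X ^ 2) * (mk 1 ^ 2 * rescale (-1) (mk 1)) ^ K, by ring⟩

lemma coeff_sum_summandSeries {n K : ℕ} (h : n < 3 * K) :
    coeff n (∑ m ∈ Finset.range (2 * K), summandSeries R m) = coeff n (1 + fibSeries R) :=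
  sub_eq_zero.mp <| by
    rw [← map_sub]; exact X_pow_dvd_iff.mp (X_pow_dvd_sum_summandSeries_sub R K) n h

end GeneratingFunctions

/-- for `n ≥ 1`,
`F_n = Σ_{m=0}^{n} Σ_{ℓ=0}^{n-m-⌊m/2⌋} C(m+ℓ-1,ℓ) C(n-m-ℓ-1, n-m-⌊m/2⌋-ℓ) (-1)^{n-m-⌊m/2⌋-ℓ}`,
the inner sum being empty when `n - m - ⌊m/2⌋ < 0`. -/
theorem fib_double_sum (n : ℕ) (hn : 1 ≤ n) :
    (Nat.fib n : ℤ) =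
      ∑ m ∈ Finset.range (n + 1), ∑ ℓ ∈ Finset.range (n + 1 - m - m / 2),
        genChoose ((m : ℤ) + (ℓ : ℤ) - 1) (ℓ : ℤ) *
          genChoose ((n : ℤ) - (m : ℤ) - (ℓ : ℤ) - 1)
            ((n : ℤ) - (m : ℤ) - ((m / 2 : ℕ) : ℤ) - (ℓ : ℤ)) *
          (-1) ^ (n - m - m / 2 - ℓ) := by
  have hfib : (Nat.fib n : ℤ) = coeff n (1 + fibSeries ℤ) := by
    simp [fibSeries, coeff_one, Nat.one_le_iff_ne_zero.mp hn]
  have hvanish : ∀ m ∈ Finset.range (2 * (n + 1)), m ∉ Finset.range (n + 1) →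
      coeff n (summandSeries ℤ m) = 0 := by
    intro m _ hm
    rw [coeff_summandSeries, show n + 1 - m - m / 2 = 0 by simp at hm; omega,
      Finset.sum_range_zero]
  rw [hfib, ← coeff_sum_summandSeries ℤ (K := n + 1) (by omega), map_sum,
    ← Finset.sum_subset (Finset.range_subset_range.mpr (by omega)) hvanish]
  refine Finset.sum_congr rfl fun m _ => ?_
  rw [coeff_summandSeries]
  refine Finset.sum_congr rfl fun ℓ hℓmem => ?_
  have hℓ : ℓ < n + 1 - m - m / 2 := Finset.mem_range.mp hℓmem
  rw [show (n : ℤ) - m - ℓ - 1 = ((m / 2 : ℕ) : ℤ) + ((n - m - m / 2 - ℓ : ℕ) : ℤ) - 1 by omega,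
    show (n : ℤ) - m - ((m / 2 : ℕ) : ℤ) - ℓ = ((n - m - m / 2 - ℓ : ℕ) : ℤ) by omega,
    genChoose_add_sub_one, genChoose_add_sub_one]
  ring
end

section
/- The bivariate formal power series B(x,y) = Σ_{n,m ≥ 0} b(n,m) xⁿ yᵐ over ℤ satisfies (1 - x - x²)(1 - xy)(1 - x²y) · B(x,y) = 1 - x - x² - x²y + 2x³y + 2x⁴y - x⁵y - x⁴y². -/
/-- `arndtLast n m` is the number of Arndt compositions of `n` whose last part equals `m`
(the last part of the empty composition is taken to be `0`). -/
noncomputable def arndtLast (n m : ℕ) : ℕ :=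
  Set.ncard {l : List ℕ | IsComposition n l ∧ IsArndt l ∧ l.getLastD 0 = m}

/-- The bivariate generating function `B(x,y) = Σ_{n,m≥0} b(n,m) xⁿ yᵐ`,
with `x = X 0` and `y = X 1`. -/
noncomputable def arndtLastGF : MvPowerSeries (Fin 2) ℤ :=
  fun d => (arndtLast (d 0) (d 1) : ℤ)

theorem isArndt_append {l l' : List ℕ} (hl : Even l.length) :
    IsArndt (l ++ l') ↔ IsArndt l ∧ IsArndt l' := by
  obtain ⟨t, ht⟩ := hl
  constructor
  · intro H
    refine ⟨fun i hi => ?_, fun i hi => ?_⟩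
    · have := H i (by simp; omega)
      rwa [List.getD_append _ _ _ _ (by omega), List.getD_append _ _ _ _ (by omega)] at this
    · have := H (t + i) (by simp; omega)
      rwa [List.getD_append_right _ _ _ _ (by omega), List.getD_append_right _ _ _ _ (by omega),
        show 2 * (t + i) + 1 - l.length = 2 * i + 1 by omega,
        show 2 * (t + i) - l.length = 2 * i by omega] at this
  · rintro ⟨H, H'⟩ i hi
    rcases lt_or_ge (2 * i + 1) l.length with h | h
    · rw [List.getD_append _ _ _ _ (by omega), List.getD_append _ _ _ _ (by omega)]
      exact H i h
    · have := H' (i - t) (by simp at hi; omega)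
      rwa [List.getD_append_right _ _ _ _ (by omega), List.getD_append_right _ _ _ _ (by omega),
        show 2 * i + 1 - l.length = 2 * (i - t) + 1 by omega,
        show 2 * i - l.length = 2 * (i - t) by omega]

theorem isArndt_singleton_s13 (a : ℕ) : IsArndt [a] := fun i hi => by simp at hi

theorem isArndt_pair {a b : ℕ} : IsArndt [a, b] ↔ b < a :=
  ⟨fun H => H 0 (by simp), fun h i hi => by
    obtain rfl : i = 0 := by simp at hi; omega
    simpa using h⟩

theorem isComposition_append {n : ℕ} {l t : List ℕ} :
    IsComposition n (l ++ t) ↔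
      (∀ x ∈ t, 0 < x) ∧ t.sum ≤ n ∧ IsComposition (n - t.sum) l := by
  simp only [IsComposition, List.mem_append, or_imp, forall_and, List.sum_append]
  constructor
  · rintro ⟨⟨hl, ht⟩, hsum⟩
    exact ⟨ht, by omega, hl, by omega⟩
  · rintro ⟨ht, hle, hl, hsum⟩
    exact ⟨⟨hl, ht⟩, by omega⟩

theorem isComposition_zero_iff {l : List ℕ} : IsComposition 0 l ↔ l = [] := by
  refine ⟨fun ⟨hpos, hsum⟩ => ?_, fun h => h ▸ ⟨by simp, rfl⟩⟩
  cases l with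
  | nil => rfl
  | cons a l => simp at hsum; simp_all

theorem IsComposition.ne_nil {n : ℕ} {l : List ℕ} (h : IsComposition n l) (hn : 0 < n) :
    l ≠ [] := by
  rintro rfl
  exact hn.ne' h.2.symm

theorem setOf_isComposition_finite (n : ℕ) : {l : List ℕ | IsComposition n l}.Finite :=
  (Set.finite_range fun c : Composition n => c.blocks).subset
    fun l ⟨hpos, hsum⟩ => ⟨⟨l, hpos _, hsum⟩, rfl⟩

theorem List.exists_eq_append_singleton_of_not_even {α : Type*} {l : List α}
    (ho : ¬Even l.length) : ∃ l' a, l = l' ++ [a] ∧ Even l'.length := by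
  obtain ⟨l', a, rfl⟩ := l.eq_nil_or_concat'.resolve_left (by rintro rfl; simp at ho)
  exact ⟨l', a, rfl, by simpa [Nat.even_add_one] using ho⟩

theorem List.exists_eq_append_pair_of_even {α : Type*} {l : List α} (he : Even l.length)
    (hl : l ≠ []) : ∃ l' a b, l = l' ++ [a, b] ∧ Even l'.length := by
  obtain ⟨l₁, b, rfl⟩ := l.eq_nil_or_concat'.resolve_left hl
  obtain ⟨l', a, rfl⟩ := l₁.eq_nil_or_concat'.resolve_left (by rintro rfl; simp at he)
  exact ⟨l', a, b, by simp, by simpa [Nat.even_add_one] using he⟩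

theorem ncard_eq_sum_ncard_of_mem_iff_exists_append {α ι : Type*} {S : Set (List α)}
    {I : Finset ι} {E : ι → Set (List α)} {t : ι → List α} {r : ℕ}
    (hE : ∀ i ∈ I, (E i).Finite) (hlen : ∀ i ∈ I, (t i).length = r) (ht : Set.InjOn t I)
    (hS : ∀ l, l ∈ S ↔ ∃ i ∈ I, ∃ l' ∈ E i, l = l' ++ t i) :
    S.ncard = ∑ i ∈ I, (E i).ncard := by
  have hS' : S = ⋃ i ∈ (I : Set ι), (· ++ t i) '' E i := by
    ext l; simp [hS, eq_comm]
  have hdisj : (I : Set ι).PairwiseDisjoint fun i => (· ++ t i) '' E i := by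
    intro i hi j hj hij
    rw [Function.onFun, Set.disjoint_left]
    rintro _ ⟨l, -, rfl⟩ ⟨l', -, h⟩
    exact hij (ht hi hj (List.append_inj' h (by rw [hlen i hi, hlen j hj])).2.symm)
  rw [hS', Set.Finite.ncard_biUnion I.finite_toSet (fun i hi => (hE i hi).image _) hdisj,
    finsum_mem_coe_finset]
  exact Finset.sum_congr rfl fun i _ =>
    Set.ncard_image_of_injective _ (List.append_left_injective _)

def evenArndtSet (k : ℕ) : Set (List ℕ) :=
  {l | IsComposition k l ∧ IsArndt l ∧ Even l.length}

noncomputable def evenArndt (k : ℕ) : ℕ := (evenArndtSet k).ncard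

theorem evenArndtSet_finite (k : ℕ) : (evenArndtSet k).Finite :=
  (setOf_isComposition_finite k).subset fun _ hl => hl.1

theorem mem_evenArndtSet_append {n : ℕ} {l t : List ℕ} (hl : Even l.length) :
    l ++ t ∈ evenArndtSet n ↔ l ∈ evenArndtSet (n - t.sum) ∧
      ((∀ x ∈ t, 0 < x) ∧ t.sum ≤ n ∧ IsArndt t ∧ Even t.length) := by
  simp only [evenArndtSet, Set.mem_ofPred_eq, isComposition_append, isArndt_append hl,
    List.length_append, Nat.even_add, hl, true_iff]
  tauto

theorem evenArndt_zero : evenArndt 0 = 1 := by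
  have : evenArndtSet 0 = {[]} := by
    ext l
    simp only [evenArndtSet, isComposition_zero_iff, Set.mem_ofPred_eq, Set.mem_singleton_iff]
    refine ⟨fun h => h.1, ?_⟩
    rintro rfl
    exact ⟨rfl, fun i hi => by simp at hi, by simp⟩
  rw [evenArndt, this, Set.ncard_singleton]

/-- Split off the last pair `[a, s - a]`: the `(s - 1) / 2` choices of `a` are `s / 2 < a < s`. -/
theorem evenArndt_eq_sum {k : ℕ} (hk : 0 < k) :
    evenArndt k = ∑ s ∈ Finset.range (k + 1), (s - 1) / 2 * evenArndt (k - s) := by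
  have hcount := ncard_eq_sum_ncard_of_mem_iff_exists_append (S := evenArndtSet k)
    (I := (Finset.range (k + 1)).sigma fun s => Finset.Ioo (s / 2) s)
    (E := fun x => evenArndtSet (k - x.1)) (t := fun x => [x.2, x.1 - x.2]) (r := 2)
    (fun _ _ => evenArndtSet_finite _) (fun _ _ => rfl) ?inj ?mem
  case inj =>
    rintro ⟨s, a⟩ h ⟨s', a'⟩ h' heq
    simp only [Finset.coe_sigma, Set.mem_sigma_iff, Finset.coe_range, Set.mem_Iio,
      Finset.coe_Ioo, Set.mem_Ioo, List.cons.injEq, and_true] at h h' heq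
    obtain ⟨rfl, hsub⟩ := heq
    obtain rfl : s = s' := by omega
    rfl
  case mem =>
    intro l
    simp only [Finset.mem_sigma, Finset.mem_range, Finset.mem_Ioo, Sigma.exists]
    constructor
    · intro hl
      obtain ⟨l', a, b, rfl, he⟩ :=
        List.exists_eq_append_pair_of_even hl.2.2 (hl.1.ne_nil hk)
      obtain ⟨hl', hpos, hsum, hba, -⟩ := (mem_evenArndtSet_append he).mp hl
      have hb : 0 < b := hpos b (by simp)
      rw [isArndt_pair] at hba
      simp only [List.sum_cons, List.sum_nil, add_zero] at hl' hsum
      exact ⟨a + b, a, ⟨by omega, by omega, by omega⟩, l', hl', by simp⟩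
    · rintro ⟨s, a, ⟨hs, has, has'⟩, l', hl', rfl⟩
      have hsum : k - [a, s - a].sum = k - s := by simp; omega
      refine (mem_evenArndtSet_append hl'.2.2).mpr ⟨by rwa [hsum], ?_, ?_,
        isArndt_pair.mpr (by omega), by simp⟩
      · simp; omega
      · simp; omega
  rw [evenArndt, hcount, Finset.sum_sigma]
  refine Finset.sum_congr rfl fun s _ => ?_
  dsimp only
  rw [Finset.sum_const, Nat.card_Ioo, smul_eq_mul, evenArndt]
  congr 1
  omega

theorem IsComposition.getLastD_pos {n : ℕ} {l : List ℕ} (h : IsComposition n l)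
    (hl : l ≠ []) :
    0 < l.getLastD 0 := by
  rw [List.getLastD_eq_getLast?, List.getLast?_eq_some_getLast hl]
  exact h.1 _ (List.getLast_mem hl)

theorem IsComposition.getLastD_le {n : ℕ} {l : List ℕ} (h : IsComposition n l) :
    l.getLastD 0 ≤ n := by
  rcases eq_or_ne l [] with rfl | hl
  · exact Nat.zero_le n
  rw [List.getLastD_eq_getLast?, List.getLast?_eq_some_getLast hl, ← h.2]
  exact List.le_sum_of_mem (List.getLast_mem hl)

theorem List.getLastD_append_of_ne_nil {α : Type*} (l : List α) {t : List α} (ht : t ≠ [])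
    (d : α) :
    (l ++ t).getLastD d = t.getLastD d := by
  simp [List.getLastD_eq_getLast?, List.getLast?_eq_some_getLast ht]

def arndtLastSet (n m : ℕ) : Set (List ℕ) :=
  {l | IsComposition n l ∧ IsArndt l ∧ l.getLastD 0 = m}

theorem arndtLastSet_finite (n m : ℕ) : (arndtLastSet n m).Finite :=
  (setOf_isComposition_finite n).subset fun _ hl => hl.1

theorem mem_arndtLastSet_append {n m : ℕ} {l t : List ℕ} (hl : Even l.length) (ht : t ≠ []) :
    l ++ t ∈ arndtLastSet n m ↔ l ∈ evenArndtSet (n - t.sum) ∧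
      ((∀ x ∈ t, 0 < x) ∧ t.sum ≤ n ∧ IsArndt t ∧ t.getLastD 0 = m) := by
  simp only [arndtLastSet, evenArndtSet, Set.mem_ofPred_eq, isComposition_append,
    isArndt_append hl, List.getLastD_append_of_ne_nil _ ht]
  tauto

theorem arndtLast_zero_right (n : ℕ) : arndtLast n 0 = if n = 0 then 1 else 0 := by
  have hS : arndtLastSet n 0 = {l | n = 0 ∧ l = []} := by
    ext l
    constructor
    · rintro ⟨hc, -, hlast⟩
      obtain rfl : l = [] := by
        by_contra hl
        exact (hc.getLastD_pos hl).ne' hlast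
      exact ⟨hc.2.symm, rfl⟩
    · rintro ⟨rfl, rfl⟩
      exact ⟨isComposition_zero_iff.mpr rfl, fun i hi => by simp at hi, rfl⟩
  change (arndtLastSet n 0).ncard = _
  rw [hS]
  split_ifs with h <;> simp [h]

theorem arndtLast_eq_zero_of_lt {n m : ℕ} (h : n < m) : arndtLast n m = 0 := by
  have : arndtLastSet n m = ∅ :=
    Set.eq_empty_of_forall_notMem fun l ⟨hc, _, hlast⟩ => by have := hc.getLastD_le; omega
  change (arndtLastSet n m).ncard = 0
  rw [this, Set.ncard_empty]

theorem ncard_arndtLastSet_sdiff_even {n m : ℕ} (hm : 0 < m) (hmn : m ≤ n) :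
    (arndtLastSet n m \ {l | Even l.length}).ncard = evenArndt (n - m) := by
  rw [ncard_eq_sum_ncard_of_mem_iff_exists_append (I := {m}) (E := fun i => evenArndtSet (n - i))
    (t := fun i => [i]) (r := 1) (fun _ _ => evenArndtSet_finite _) (fun _ _ => rfl)
    (Set.injOn_of_injective List.singleton_injective), Finset.sum_singleton, evenArndt]
  intro l
  simp only [Finset.mem_singleton, exists_eq_left, Set.mem_sdiff, Set.mem_ofPred_eq]
  constructor
  · rintro ⟨hl, hodd⟩
    obtain ⟨l', a, rfl, he⟩ := List.exists_eq_append_singleton_of_not_even hodd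
    obtain ⟨hl', -, -, -, rfl⟩ := (mem_arndtLastSet_append he (List.cons_ne_nil _ _)).mp hl
    exact ⟨l', by simpa using hl', rfl⟩
  · rintro ⟨l', hl', rfl⟩
    refine ⟨(mem_arndtLastSet_append hl'.2.2 (List.cons_ne_nil _ _)).mpr
      ⟨by simpa using hl', by simpa using hm, by simpa using hmn, isArndt_singleton_s13 m, rfl⟩,
      ?_⟩
    simpa [Nat.even_add_one] using hl'.2.2

theorem ncard_arndtLastSet_inter_even {n m : ℕ} (hm : 0 < m) :
    (arndtLastSet n m ∩ {l | Even l.length}).ncard =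
      ∑ k ∈ Finset.range (n - 2 * m), evenArndt k := by
  refine ncard_eq_sum_ncard_of_mem_iff_exists_append (E := evenArndtSet)
    (t := fun k => [n - m - k, m]) (r := 2) (fun _ _ => evenArndtSet_finite _) (fun _ _ => rfl)
    (fun k hk k' hk' h => by simp at hk hk' h; omega) fun l => ?_
  simp only [Finset.mem_range, Set.mem_inter_iff, Set.mem_ofPred_eq]
  constructor
  · rintro ⟨hl, he⟩
    obtain ⟨l', a, b, rfl, he'⟩ :=
      List.exists_eq_append_pair_of_even he (by rintro rfl; exact hm.ne hl.2.2)
    obtain ⟨hl', -, hsum, hba, hlast⟩ :=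
      (mem_arndtLastSet_append he' (List.cons_ne_nil _ _)).mp hl
    obtain rfl : b = m := by simpa using hlast
    rw [isArndt_pair] at hba
    simp only [List.sum_cons, List.sum_nil, add_zero] at hl' hsum
    refine ⟨n - (a + b), by omega, l', hl', ?_⟩
    simp only [List.append_cancel_left_eq, List.cons.injEq, and_true]
    omega
  · rintro ⟨k, hk, l', hl', rfl⟩
    have hsum : n - [n - m - k, m].sum = k := by simp; omega
    refine ⟨(mem_arndtLastSet_append hl'.2.2 (List.cons_ne_nil _ _)).mpr
      ⟨by rwa [hsum], ?_, by simp; omega, isArndt_pair.mpr (by omega), by simp⟩, ?_⟩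
    · simp; omega
    · simpa [Nat.even_add] using hl'.2.2

theorem arndtLast_eq {n m : ℕ} (hm : 0 < m) (hmn : m ≤ n) :
    arndtLast n m = evenArndt (n - m) + ∑ k ∈ Finset.range (n - 2 * m), evenArndt k := by
  change (arndtLastSet n m).ncard = _
  rw [← Set.ncard_inter_add_ncard_sdiff_eq_ncard (arndtLastSet n m) {l | Even l.length}
    (arndtLastSet_finite n m), ncard_arndtLastSet_sdiff_even hm hmn,
    ncard_arndtLastSet_inter_even hm, add_comm]

open PowerSeries

noncomputable def evenArndtSeries : ℤ⟦X⟧ := mk fun k => (evenArndt k : ℤ)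

noncomputable def arndtPairSeries : ℤ⟦X⟧ := mk fun s => (((s - 1) / 2 : ℕ) : ℤ)

theorem evenArndtSeries_eq_one_add_mul :
    evenArndtSeries = 1 + arndtPairSeries * evenArndtSeries := by
  ext k
  rw [map_add, coeff_mul, Finset.Nat.sum_antidiagonal_eq_sum_range_succ_mk]
  simp only [evenArndtSeries, arndtPairSeries, coeff_mk]
  rcases Nat.eq_zero_or_pos k with rfl | hk
  · simp [evenArndt_zero]
  · rw [coeff_one, if_neg hk.ne', evenArndt_eq_sum hk]
    push_cast
    simp

theorem one_sub_X_mul_one_sub_X_sq_mul_arndtPairSeries :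
    (1 - X) * (1 - X ^ 2) * arndtPairSeries = (X : ℤ⟦X⟧) ^ 3 := by
  have hexpand : (1 - X) * (1 - X ^ 2) * arndtPairSeries =
      arndtPairSeries - X ^ 1 * arndtPairSeries - X ^ 2 * arndtPairSeries +
        X ^ 3 * arndtPairSeries := by ring
  ext k
  rw [hexpand, map_add, map_sub, map_sub, coeff_X_pow_mul',
    coeff_X_pow_mul', coeff_X_pow_mul', coeff_X_pow]
  simp only [arndtPairSeries, coeff_mk]
  split_ifs <;> push_cast <;> omega

theorem one_sub_X_sub_X_sq_mul_evenArndtSeries :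
    (1 - X - X ^ 2) * evenArndtSeries = (1 - X) * (1 - (X : ℤ⟦X⟧) ^ 2) := by
  linear_combination (1 - X) * (1 - X ^ 2) * evenArndtSeries_eq_one_add_mul +
    evenArndtSeries * one_sub_X_mul_one_sub_X_sq_mul_arndtPairSeries

theorem coeff_mul_mk_one {R : Type*} [Semiring R] (f : R⟦X⟧) (n : ℕ) :
    coeff n (f * mk 1) = ∑ k ∈ Finset.range (n + 1), coeff k f := by
  simp [coeff_mul, Finset.Nat.sum_antidiagonal_eq_sum_range_succ_mk]

section Bivariate

variable {R : Type*} [CommRing R]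

def bivariateSeries (f : ℕ → ℕ → R) : MvPowerSeries (Fin 2) R := fun d => f (d 0) (d 1)

@[simp]
theorem coeff_bivariateSeries (f : ℕ → ℕ → R) (d : Fin 2 →₀ ℕ) :
    MvPowerSeries.coeff d (bivariateSeries f) = f (d 0) (d 1) := rfl

theorem bivariateSeries_sub (f g : ℕ → ℕ → R) :
    bivariateSeries f - bivariateSeries g = bivariateSeries fun n m => f n m - g n m := rfl

theorem bivariateSeries_add (f g : ℕ → ℕ → R) :
    bivariateSeries f + bivariateSeries g = bivariateSeries fun n m => f n m + g n m := rfl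

theorem one_eq_bivariateSeries :
    (1 : MvPowerSeries (Fin 2) R) =
      bivariateSeries fun n m => if n = 0 ∧ m = 0 then 1 else 0 := by
  ext d
  simp [MvPowerSeries.coeff_one, Finsupp.ext_iff, Fin.forall_fin_two]

theorem X_pow_mul_X_pow_mul_bivariateSeries (a b : ℕ) (f : ℕ → ℕ → R) :
    MvPowerSeries.X 0 ^ a * MvPowerSeries.X 1 ^ b * bivariateSeries f =
      bivariateSeries fun n m => if a ≤ n ∧ b ≤ m then f (n - a) (m - b) else 0 := by
  ext d
  rw [MvPowerSeries.X_pow_eq, MvPowerSeries.X_pow_eq, MvPowerSeries.monomial_mul_monomial, one_mul,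
    MvPowerSeries.coeff_monomial_mul]
  simp [Finsupp.le_def, Fin.forall_fin_two]

theorem subst_X_zero_eq_bivariateSeries (f : R⟦X⟧) :
    f.subst (MvPowerSeries.X 0 : MvPowerSeries (Fin 2) R) =
      bivariateSeries fun n m => if m = 0 then coeff n f else 0 := by
  ext d
  simp [coeff_subst_single, Finsupp.ext_iff, Fin.forall_fin_two]

/-- `∑_{m ≥ 1} x^(a m + c) y^m f(x)`, where `x = X 0` and `y = X 1`. -/
noncomputable def geomYSeries (a c : ℕ) (f : R⟦X⟧) : MvPowerSeries (Fin 2) R :=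
  bivariateSeries fun n m => if 1 ≤ m ∧ a * m + c ≤ n then coeff (n - a * m - c) f else 0

theorem one_sub_X_pow_mul_X_mul_geomYSeries (a c : ℕ) (f : R⟦X⟧) :
    (1 - MvPowerSeries.X 0 ^ a * MvPowerSeries.X 1) * geomYSeries a c f =
      MvPowerSeries.X 0 ^ (a + c) * MvPowerSeries.X 1 * f.subst (MvPowerSeries.X 0) := by
  rw [sub_mul, one_mul, ← pow_one (MvPowerSeries.X 1 : MvPowerSeries (Fin 2) R), geomYSeries,
    X_pow_mul_X_pow_mul_bivariateSeries, subst_X_zero_eq_bivariateSeries,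
    X_pow_mul_X_pow_mul_bivariateSeries, bivariateSeries_sub]
  congr 1
  funext n m
  rcases m with _ | _ | m
  · simp
  · simp [Nat.sub_sub]
  simp only [Nat.add_sub_cancel, Nat.add_one_ne_zero, if_false, ite_self, mul_add_one, Nat.sub_sub]
  generalize a * m = p
  split_ifs <;> first | omega | simp | (rw [sub_eq_zero]; congr 2; omega)

end Bivariate

theorem arndtLastGF_eq_one_add_geomYSeries :
    arndtLastGF =
      1 + geomYSeries 1 0 evenArndtSeries + geomYSeries 2 1 (evenArndtSeries * mk 1) := by
  rw [one_eq_bivariateSeries, geomYSeries, geomYSeries, bivariateSeries_add, bivariateSeries_add]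
  change bivariateSeries (fun n m => (arndtLast n m : ℤ)) = _
  congr 1
  funext n m
  simp only [evenArndtSeries, coeff_mk, coeff_mul_mk_one, one_mul, add_zero, Nat.sub_zero]
  rcases Nat.eq_zero_or_pos m with rfl | hm
  · simp [arndtLast_zero_right]
  rcases lt_or_ge n m with hnm | hmn
  · rw [arndtLast_eq_zero_of_lt hnm, if_neg (by omega), if_neg (by omega), if_neg (by omega)]
    simp
  rw [arndtLast_eq hm hmn, if_neg (by omega), if_pos ⟨hm, hmn⟩, zero_add]
  push_cast
  split_ifs with h
  · rw [show n - 2 * m - 1 + 1 = n - 2 * m by omega]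
  · rw [show n - 2 * m = 0 by omega]
    simp

theorem one_sub_X_sub_X_sq_mul_subst_evenArndtSeries :
    (1 - MvPowerSeries.X 0 - MvPowerSeries.X 0 ^ 2) *
        evenArndtSeries.subst (MvPowerSeries.X (0 : Fin 2) : MvPowerSeries (Fin 2) ℤ) =
      (1 - MvPowerSeries.X 0) * (1 - MvPowerSeries.X 0 ^ 2) := by
  rw [← coe_substAlgHom (HasSubst.X (S := ℤ) (0 : Fin 2))]
  simpa [substAlgHom_X] using
    congrArg (substAlgHom (HasSubst.X (S := ℤ) (0 : Fin 2))) one_sub_X_sub_X_sq_mul_evenArndtSeries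

theorem one_sub_X_sub_X_sq_mul_subst_evenArndtSeries_mul_mk_one :
    (1 - MvPowerSeries.X 0 - MvPowerSeries.X 0 ^ 2) *
        (evenArndtSeries * mk 1).subst (MvPowerSeries.X (0 : Fin 2) : MvPowerSeries (Fin 2) ℤ) =
      1 - MvPowerSeries.X 0 ^ 2 := by
  have h : (1 - X - X ^ 2) * (evenArndtSeries * mk 1) = 1 - (X : ℤ⟦X⟧) ^ 2 := by
    linear_combination mk 1 * one_sub_X_sub_X_sq_mul_evenArndtSeries +
      (1 - X ^ 2) * mk_one_mul_one_sub_eq_one ℤ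
  rw [← coe_substAlgHom (HasSubst.X (S := ℤ) (0 : Fin 2))]
  simpa [substAlgHom_X] using congrArg (substAlgHom (HasSubst.X (S := ℤ) (0 : Fin 2))) h

/-- `(1 - x - x²)(1 - xy)(1 - x²y) · B(x,y)
= 1 - x - x² - x²y + 2x³y + 2x⁴y - x⁵y - x⁴y²`. -/
theorem arndtLastGF_eq :
    (1 - MvPowerSeries.X 0 - MvPowerSeries.X 0 ^ 2) *
        (1 - MvPowerSeries.X 0 * MvPowerSeries.X 1) *
        (1 - MvPowerSeries.X 0 ^ 2 * MvPowerSeries.X 1) * arndtLastGF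
      = 1 - MvPowerSeries.X 0 - MvPowerSeries.X 0 ^ 2
        - MvPowerSeries.X 0 ^ 2 * MvPowerSeries.X 1
        + 2 * MvPowerSeries.X 0 ^ 3 * MvPowerSeries.X 1
        + 2 * MvPowerSeries.X 0 ^ 4 * MvPowerSeries.X 1
        - MvPowerSeries.X 0 ^ 5 * MvPowerSeries.X 1
        - MvPowerSeries.X 0 ^ 4 * MvPowerSeries.X 1 ^ 2 := by
  set x : MvPowerSeries (Fin 2) ℤ := MvPowerSeries.X 0
  set y : MvPowerSeries (Fin 2) ℤ := MvPowerSeries.X 1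
  rw [arndtLastGF_eq_one_add_geomYSeries]
  linear_combination
    (1 - x - x ^ 2) * (1 - x ^ 2 * y) * one_sub_X_pow_mul_X_mul_geomYSeries 1 0 evenArndtSeries
    + (1 - x - x ^ 2) * (1 - x * y) *
      one_sub_X_pow_mul_X_mul_geomYSeries 2 1 (evenArndtSeries * mk 1)
    + (1 - x ^ 2 * y) * x * y * one_sub_X_sub_X_sq_mul_subst_evenArndtSeries
    + (1 - x * y) * x ^ 3 * y * one_sub_X_sub_X_sq_mul_subst_evenArndtSeries_mul_mk_one
end
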